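/- For n ≥ 2, the large rank of the endomorphism semigroup of the Brandt semigroup B_n equals n! + n + 1: r_5(End(B_n)) = n! + n + 1. -/
import Mathlib


/-- The underlying set of the Brandt semigroup `B_n`: pairs `(i,j)` with
`i, j ∈ [n]` together with the zero element `θ` (represented by `none`). -/
abbrev Brandt (n : ℕ) := Option (Fin n × Fin n)

/-- The Brandt semigroup operation: `(i,j) + (k,l) = (i,l)` if `j = k`, and `θ`
otherwise; `θ` is a two-sided zero. -/
def bmul {n : ℕ} : Brandt n → Brandt n → Brandt n
  | some (i, j), some (k, l) => if j = k then some (i, l) else none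
  | _, _ => none

instance {n : ℕ} : Mul (Brandt n) := ⟨bmul⟩

@[simp] lemma brandt_mul_def {n : ℕ} (x y : Brandt n) : x * y = bmul x y := rfl

/-- A map `B_n → B_n` is a (semigroup) endomorphism if it preserves the operation. -/
def IsEndo {n : ℕ} (f : Brandt n → Brandt n) : Prop :=
  ∀ x y : Brandt n, f (x * y) = f x * f y

/-- `End(B_n)`: the semigroup (indeed monoid) of endomorphisms of `B_n`.
Multiplication `f * g` is "first `f`, then `g`", the composition convention of
the paper. -/
def BrandtEnd (n : ℕ) := {f : Brandt n → Brandt n // IsEndo f}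

instance {n : ℕ} : Monoid (BrandtEnd n) where
  mul f g := ⟨g.1 ∘ f.1, fun x y =>
    (congrArg g.1 (f.2 x y)).trans (g.2 _ _)⟩
  one := ⟨id, fun _ _ => rfl⟩
  mul_assoc f g h := rfl
  one_mul f := rfl
  mul_one f := rfl

namespace BrandtAux

variable {n : ℕ}

@[simp] lemma bmul_none (x : Brandt n) : bmul x none = none := by
  rcases x with _ | ⟨i, j⟩ <;> rfl

@[simp] lemma none_bmul (x : Brandt n) : bmul none x = none := by
  rcases x with _ | ⟨i, j⟩ <;> rfl

@[simp] lemma bmul_some (i j k l : Fin n) :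
    bmul (some (i, j)) (some (k, l)) = if j = k then some (i, l) else none := rfl

lemma zf_endo : IsEndo (fun _ : Brandt n => none) := fun _ _ => rfl

lemma cf_endo (i : Fin n) : IsEndo (fun _ : Brandt n => some (i, i)) := by
  intro x y; simp

/-- the zero endomorphism -/
def zE : BrandtEnd n := ⟨fun _ => none, zf_endo⟩

/-- constant endomorphisms -/
def cE (i : Fin n) : BrandtEnd n := ⟨fun _ => some (i, i), cf_endo i⟩

instance : Finite (BrandtEnd n) := by unfold BrandtEnd; infer_instance

lemma af_endo (σ : Equiv.Perm (Fin n)) :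
    IsEndo (Option.map (Prod.map σ σ)) := by
  rintro (_ | ⟨i, j⟩) (_ | ⟨k, l⟩)
  · rfl
  · rfl
  · rfl
  · show Option.map (Prod.map σ σ) (bmul _ _) = bmul _ _
    by_cases h : j = k
    · subst h; simp
    · have h2 : ¬ (σ j = σ k) := fun hh => h (σ.injective hh)
      simp [h, h2]

/-- automorphisms induced by permutations -/
def aE (σ : Equiv.Perm (Fin n)) : BrandtEnd n := ⟨Option.map (Prod.map σ σ), af_endo σ⟩

lemma classify (f : BrandtEnd n) :
    f = zE ∨ (∃ i, f = cE i) ∨ ∃ σ, f = aE σ := by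
  obtain ⟨f, hf⟩ := f
  have hθ : f none = bmul (f none) (f none) := hf none none
  match h : f none with
  | some (i, j) =>
    rw [h] at hθ
    have hji : j = i := by by_contra hc; simp [hc] at hθ
    subst hji
    -- f is the constant map at (i,i)  (here j = i, variable named j)
    refine Or.inr (Or.inl ⟨j, ?_⟩)
    apply Subtype.ext; funext x
    have hx : f none = bmul (f x) (f none) := by
      have := hf x none; simpa using this
    rw [h] at hx
    show f x = some (j, j)
    match hx2 : f x with
    | none => rw [hx2] at hx; simp at hx
    | some (a, b) =>
      rw [hx2] at hx
      by_cases hb : b = j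
      · subst hb
        simp at hx
        simp [hx]
      · simp [hb] at hx
  | none =>
    by_cases hz : ∃ i : Fin n, f (some (i, i)) = none
    · obtain ⟨i, hi⟩ := hz
      refine Or.inl ?_
      apply Subtype.ext; funext x
      rcases x with _ | ⟨k, l⟩
      · exact h
      · show f (some (k, l)) = none
        have h1 : f (some (k, i)) = none := by
          have := hf (some (k, i)) (some (i, i))
          simp [hi, h] at this; simpa using this
        have h2 : f (some (i, l)) = none := by
          have := hf (some (i, i)) (some (i, l))
          simp [hi, h] at this; simpa using this
        have := hf (some (k, i)) (some (i, l))
        simp [h1, h2] at this; simpa using this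
    · push_neg at hz
      have key : ∀ i : Fin n, ∃ a, f (some (i, i)) = some (a, a) := by
        intro i
        have hii : f (some (i, i)) = bmul (f (some (i, i))) (f (some (i, i))) := by
          have := hf (some (i, i)) (some (i, i)); simpa using this
        match h' : f (some (i, i)) with
        | none => exact absurd h' (hz i)
        | some (a, b) =>
          rw [h'] at hii
          have hba : b = a := by by_contra hc; simp [hc] at hii
          exact ⟨a, by rw [hba]⟩
      choose g hg using key
      have main : ∀ i j : Fin n, f (some (i, j)) = some (g i, g j) := by
        intro i j
        have h1 : some (g i, g i) = bmul (f (some (i, j))) (f (some (j, i))) := by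
          have := hf (some (i, j)) (some (j, i)); simp [hg] at this
          simpa using this
        match hx : f (some (i, j)) with
        | none => rw [hx] at h1; simp at h1
        | some (a, b) =>
          match hy : f (some (j, i)) with
          | none => rw [hx, hy] at h1; simp at h1
          | some (c, d) =>
            rw [hx, hy] at h1
            have ha : a = g i := by
              by_cases hbc : b = c
              · simp [hbc] at h1; exact h1.1.symm
              · simp [hbc] at h1
            have h2 : f (some (i, j)) = bmul (f (some (i, j))) (f (some (j, j))) := by
              have := hf (some (i, j)) (some (j, j)); simpa using this
            rw [hx, hg] at h2
            have hb : b = g j := by by_contra hc; simp [hc] at h2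
            rw [ha, hb]
      have hinj : Function.Injective g := by
        intro i j hij
        by_contra hij'
        have h1 : f (some (i, j) * some (i, j)) = bmul (f (some (i, j))) (f (some (i, j))) :=
          hf _ _
        rw [main] at h1
        have : (some (i, j) : Brandt n) * some (i, j) = none := by
          simp [show ¬ j = i from fun hh => hij' hh.symm]
        rw [this, h] at h1
        rw [hij] at h1
        simp at h1
      have hbij := Finite.injective_iff_bijective.mp hinj
      refine Or.inr (Or.inr ⟨Equiv.ofBijective g hbij, ?_⟩)
      apply Subtype.ext; funext x
      rcases x with _ | ⟨i, j⟩
      · exact h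
      · show f (some (i, j)) = Option.map (Prod.map _ _) (some (i, j))
        rw [main]; rfl

lemma cE_apply_none (i : Fin n) : (cE i).1 none = some (i, i) := rfl
lemma aE_apply_none (σ : Equiv.Perm (Fin n)) : (aE σ).1 none = none := rfl
lemma zE_apply (x : Brandt n) : (zE (n := n)).1 x = none := rfl

lemma cE_inj : Function.Injective (cE (n := n)) := by
  intro i j h
  have := congrFun (congrArg Subtype.val h) none
  simpa [cE] using this

lemma aE_inj : Function.Injective (aE (n := n)) := by
  intro σ τ h
  apply Equiv.ext; intro i
  have := congrFun (congrArg Subtype.val h) (some (i, i))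
  simp only [aE, Option.map_some, Prod.map, Option.some.injEq, Prod.mk.injEq] at this
  exact this.1

lemma zE_ne_cE (i : Fin n) : zE ≠ cE i := by
  intro h
  have := congrFun (congrArg Subtype.val h) none
  simp [zE, cE] at this

lemma zE_ne_aE (hn : 1 ≤ n) (σ : Equiv.Perm (Fin n)) : zE (n := n) ≠ aE σ := by
  intro h
  have := congrFun (congrArg Subtype.val h) (some (⟨0, hn⟩, ⟨0, hn⟩))
  simp [zE, aE] at this

lemma cE_ne_aE (i : Fin n) (σ : Equiv.Perm (Fin n)) : cE i ≠ aE σ := by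
  intro h
  have := congrFun (congrArg Subtype.val h) none
  simp [cE, aE] at this

/-- the set of nonzero endomorphisms -/
def U0 (n : ℕ) : Set (BrandtEnd n) := Set.range cE ∪ Set.range aE

lemma zE_notMem_U0 (hn : 1 ≤ n) : zE (n := n) ∉ U0 n := by
  rintro (⟨i, hi⟩ | ⟨σ, hσ⟩)
  · exact zE_ne_cE i hi.symm
  · exact zE_ne_aE hn σ hσ.symm

lemma mul_val (f g : BrandtEnd n) : (f * g).1 = g.1 ∘ f.1 := rfl

lemma cE_mul_cE (i j : Fin n) : cE i * cE j = cE (n := n) j := rfl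

lemma cE_mul_aE (i : Fin n) (σ : Equiv.Perm (Fin n)) : cE i * aE σ = cE (σ i) := rfl

lemma aE_mul_cE (σ : Equiv.Perm (Fin n)) (j : Fin n) : aE σ * cE j = cE j := rfl

lemma aE_mul_aE (σ τ : Equiv.Perm (Fin n)) : aE σ * aE τ = aE (σ.trans τ) := by
  apply Subtype.ext; funext x
  rcases x with _ | ⟨i, j⟩ <;> rfl

/-- `U0` as a subsemigroup -/
def S0 (n : ℕ) : Subsemigroup (BrandtEnd n) where
  carrier := U0 n
  mul_mem' := by
    rintro a b (⟨i, rfl⟩ | ⟨σ, rfl⟩) (⟨j, rfl⟩ | ⟨τ, rfl⟩)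
    · rw [cE_mul_cE]; exact Or.inl ⟨j, rfl⟩
    · rw [cE_mul_aE]; exact Or.inl ⟨τ i, rfl⟩
    · rw [aE_mul_cE]; exact Or.inl ⟨j, rfl⟩
    · rw [aE_mul_aE]; exact Or.inr ⟨σ.trans τ, rfl⟩

lemma ncard_U0 : (U0 n).ncard = n.factorial + n := by
  have hd : Disjoint (Set.range (cE (n := n))) (Set.range aE) := by
    rw [Set.disjoint_left]
    rintro x ⟨i, rfl⟩ ⟨σ, hσ⟩
    exact cE_ne_aE i σ hσ.symm
  rw [U0, Set.ncard_union_eq hd (Set.toFinite _) (Set.toFinite _)]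
  rw [← Set.image_univ, ← Set.image_univ,
    Set.ncard_image_of_injective _ cE_inj, Set.ncard_image_of_injective _ aE_inj,
    Set.ncard_univ, Set.ncard_univ, Nat.card_eq_fintype_card, Nat.card_eq_fintype_card,
    Fintype.card_fin, Fintype.card_perm, Fintype.card_fin]
  omega

lemma univ_eq (hn : 1 ≤ n) :
    (Set.univ : Set (BrandtEnd n)) = insert zE (U0 n) := by
  refine (Set.eq_univ_of_forall ?_).symm
  intro f
  rcases classify f with h | ⟨i, h⟩ | ⟨σ, h⟩
  · rw [h]; exact Set.mem_insert _ _
  · rw [h]; exact Set.mem_insert_of_mem _ (Or.inl ⟨i, rfl⟩)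
  · rw [h]; exact Set.mem_insert_of_mem _ (Or.inr ⟨σ, rfl⟩)

lemma ncard_univ_brandtEnd (hn : 1 ≤ n) :
    (Set.univ : Set (BrandtEnd n)).ncard = n.factorial + n + 1 := by
  rw [univ_eq hn, Set.ncard_insert_of_notMem (zE_notMem_U0 hn) (Set.toFinite _), ncard_U0]

end BrandtAux

open BrandtAux in
/-- For `n ≥ 2`, the large rank of `End(B_n)` (the least `k` such that every
subset of `End(B_n)` of cardinality `k` generates `End(B_n)`) equals
`n! + n + 1`. -/
theorem large_rank_endBn (n : ℕ) (hn : 2 ≤ n) :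
    IsLeast {k : ℕ | ∀ U : Set (BrandtEnd n),
      U.ncard = k → Subsemigroup.closure U = ⊤} (n.factorial + n + 1) := by
  have hn1 : 1 ≤ n := by omega
  constructor
  · intro U hU
    have hUuniv : U = Set.univ := by
      apply Set.eq_of_subset_of_ncard_le (Set.subset_univ U)
        (by rw [hU, ncard_univ_brandtEnd hn1]) (Set.toFinite _)
    rw [hUuniv, Subsemigroup.closure_univ]
  · intro k hk
    by_contra hc
    push_neg at hc
    have hk' : k ≤ (U0 n).ncard := by rw [ncard_U0]; omega
    obtain ⟨V, hVsub, hVcard⟩ := Set.exists_subset_card_eq hk'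
    have htop := hk V hVcard
    have hle : Subsemigroup.closure V ≤ S0 n := Subsemigroup.closure_le.mpr hVsub
    have : BrandtAux.zE ∈ S0 n := hle (htop ▸ Subsemigroup.mem_top _)
    exact zE_notMem_U0 hn1 this
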